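/- Let $(\Omega,\mathcal{F},\mathbb{P})$ be a probability space, $H$ a nonempty finite index set, and $F : H \to \mathbb{R}$ a fixed vector. Let $(g_j)_{j \in H}$ be real-valued random variables on $\Omega$ such that each $g_j$ takes values in $\{-1,1\}$ with $\mathbb{P}(g_j = 1) = \mathbb{P}(g_j = -1) = 1/2$, and such that the family $(g_j)_{j\in H}$ is $4$-wise independent, i.e. for every subset $S \subseteq H$ with $|S| \le 4$ the variables $(g_j)_{j \in S}$ are mutually independent. Define $X = \sum_{j\in H} F(j)\, g_j$, $F_2 = \sum_{j\in H} F(j)^2$, and $F_4 = \sum_{j\in H} F(j)^4$. Then $\mathbb{E}[X^4] = 3 F_2^2 - 2 F_4$. -/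

import Mathlib

/-!
Expanding the fourth power gives `𝔼[X⁴] = ∑ F a F b F c F d 𝔼[g a g b g c g d]`. As `g j ^ 2 = 1`,
a repeated index reduces the moment to `𝔼[g i g j] = δ i j`, while an index `a` different from
the other three splits off, by 4-wise independence, as a centred independent factor, so the moment
vanishes. Hence the moment is `1` exactly when the indices pair up, and summing over the three
pairings counts the diagonal `a = b = c = d` three times instead of once: `3 F₂² - 2 F₄`.
-/

open MeasureTheory ProbabilityTheory Finset

section

variable {Ω : Type*} [MeasurableSpace Ω] {μ : Measure Ω} {H : Type*}

theorem Finset.sum_pow_four {R : Type*} [CommSemiring R] (s : Finset H) (x : H → R) :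
    (∑ j ∈ s, x j) ^ 4 = ∑ a ∈ s, ∑ b ∈ s, ∑ c ∈ s, ∑ d ∈ s, x a * x b * x c * x d := by
  simp only [← sum_mul, ← mul_sum]
  ring

theorem integral_sum_mul_pow_four [Fintype H] (F : H → ℝ) {g : H → Ω → ℝ}
    (hint : ∀ a b c d, Integrable (fun ω => g a ω * g b ω * g c ω * g d ω) μ) :
    ∫ ω, (∑ j, F j * g j ω) ^ 4 ∂μ =
      ∑ a, ∑ b, ∑ c, ∑ d, F a * F b * F c * F d * ∫ ω, g a ω * g b ω * g c ω * g d ω ∂μ := by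
  have hprod (ω : Ω) (a b c d : H) :
      F a * g a ω * (F b * g b ω) * (F c * g c ω) * (F d * g d ω) =
        F a * F b * F c * F d * (g a ω * g b ω * g c ω * g d ω) := by
    ring
  simp only [sum_pow_four, hprod, ← integral_const_mul]
  simp (disch := intro _ _; repeat' first
    | exact (hint ..).const_mul _ | (apply integrable_finsetSum; intro _ _)) only [integral_finsetSum]

theorem integral_eq_zero_of_eq_one_or_eq_neg_one [IsProbabilityMeasure μ] {X : Ω → ℝ}
    (hX : Measurable X) (hval : ∀ ω, X ω = 1 ∨ X ω = -1) (hp1 : μ {ω | X ω = 1} = 1 / 2) :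
    ∫ ω, X ω ∂μ = 0 := by
  have hA : MeasurableSet {ω | X ω = 1} := hX (measurableSet_singleton 1)
  have hX_eq : X = fun ω => {ω | X ω = 1}.indicator (fun _ => (2 : ℝ)) ω - 1 := by
    funext ω
    rcases hval ω with h | h <;> norm_num [h]
  rw [hX_eq, integral_sub ((integrable_const 2).indicator hA) (integrable_const 1),
    integral_indicator_const _ hA, integral_const]
  simp [measureReal_def, hp1]

theorem indepFun_mul_mul_of_ne {g : H → Ω → ℝ} (hmeas : ∀ j, Measurable (g j))
    (hindep : ∀ S : Finset H, S.card ≤ 4 → iIndepFun (fun j : S => g j) μ) {a b c d : H}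
    (hb : a ≠ b) (hc : a ≠ c) (hd : a ≠ d) :
    IndepFun (g a) (fun ω => g b ω * g c ω * g d ω) μ := by
  classical
  set S : Finset H := {a, b, c, d}
  let a' : S := ⟨a, by simp [S]⟩
  let b' : S := ⟨b, by simp [S]⟩
  let c' : S := ⟨c, by simp [S]⟩
  let d' : S := ⟨d, by simp [S]⟩
  have h := (hindep S card_le_four).indepFun_finset {a'} {b', c', d'}
    (by simp [a', b', c', d', hb, hc, hd]) fun j => hmeas j
  exact h.comp (measurable_pi_apply ⟨a', mem_singleton_self _⟩)
    (((measurable_pi_apply ⟨b', by simp⟩).mul (measurable_pi_apply ⟨c', by simp⟩)).mul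
      (measurable_pi_apply ⟨d', by simp⟩))

theorem integral_mul_mul_mul_eq_zero_of_ne [IsProbabilityMeasure μ] {g : H → Ω → ℝ}
    (hmeas : ∀ j, Measurable (g j)) (hval : ∀ j ω, g j ω = 1 ∨ g j ω = -1)
    (hp1 : ∀ j, μ {ω | g j ω = 1} = 1 / 2)
    (hindep : ∀ S : Finset H, S.card ≤ 4 → iIndepFun (fun j : S => g j) μ) {a b c d : H}
    (hb : a ≠ b) (hc : a ≠ c) (hd : a ≠ d) :
    ∫ ω, g a ω * g b ω * g c ω * g d ω ∂μ = 0 := by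
  have h := (indepFun_mul_mul_of_ne hmeas hindep hb hc hd).integral_mul_eq_mul_integral
    (hmeas a).aestronglyMeasurable (((hmeas b).mul (hmeas c)).mul (hmeas d)).aestronglyMeasurable
  rw [integral_eq_zero_of_eq_one_or_eq_neg_one (hmeas a) (hval a) (hp1 a), zero_mul] at h
  simpa only [Pi.mul_apply, mul_assoc] using h

variable [DecidableEq H]

theorem integral_mul_eq_ite [IsProbabilityMeasure μ] {g : H → Ω → ℝ}
    (hmeas : ∀ j, Measurable (g j)) (hval : ∀ j ω, g j ω = 1 ∨ g j ω = -1)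
    (hp1 : ∀ j, μ {ω | g j ω = 1} = 1 / 2)
    (hindep : ∀ S : Finset H, S.card ≤ 2 → iIndepFun (fun j : S => g j) μ) (a b : H) :
    ∫ ω, g a ω * g b ω ∂μ = if a = b then 1 else 0 := by
  split_ifs with hab
  · subst hab
    simp [mul_self_eq_one_iff.mpr (hval a _)]
  · have hI : IndepFun (g a) (g b) μ := (hindep {a, b} card_le_two).indepFun
      (i := ⟨a, by simp⟩) (j := ⟨b, by simp⟩) (by simp [hab])
    refine (hI.integral_mul_eq_mul_integral (hmeas a).aestronglyMeasurable
      (hmeas b).aestronglyMeasurable).trans ?_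
    rw [integral_eq_zero_of_eq_one_or_eq_neg_one (hmeas a) (hval a) (hp1 a), zero_mul]

/-- Counts the pairings `{ab|cd}`, `{ac|bd}`, `{ad|bc}` of the indices into equal pairs,
corrected on the diagonal, where all three count but `𝔼[g a ^ 4] = 1`. -/
def pairingWeight (a b c d : H) : ℝ :=
  (if a = b then 1 else 0) * (if c = d then 1 else 0) +
    (if a = c then 1 else 0) * (if b = d then 1 else 0) +
    (if a = d then 1 else 0) * (if b = c then 1 else 0) -
    2 * ((if a = b then 1 else 0) * (if a = c then 1 else 0) * (if a = d then 1 else 0))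

theorem integral_mul_mul_mul_eq_pairingWeight [IsProbabilityMeasure μ] {g : H → Ω → ℝ}
    (hmeas : ∀ j, Measurable (g j)) (hval : ∀ j ω, g j ω = 1 ∨ g j ω = -1)
    (hp1 : ∀ j, μ {ω | g j ω = 1} = 1 / 2)
    (hindep : ∀ S : Finset H, S.card ≤ 4 → iIndepFun (fun j : S => g j) μ) (a b c d : H) :
    ∫ ω, g a ω * g b ω * g c ω * g d ω ∂μ = pairingWeight a b c d := by
  have hsq (j : H) (ω : Ω) : g j ω * g j ω = 1 := mul_self_eq_one_iff.mpr (hval j ω)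
  have hpair := integral_mul_eq_ite hmeas hval hp1 fun S hS => hindep S (hS.trans (by norm_num))
  obtain rfl | hab := eq_or_ne a b
  · simp_rw [hsq, one_mul, hpair]
    unfold pairingWeight; split_ifs <;> subst_vars <;> norm_num at *
  obtain rfl | hac := eq_or_ne a c
  · simp_rw [mul_right_comm _ (g b _), hsq, one_mul, hpair]
    unfold pairingWeight; split_ifs <;> subst_vars <;> norm_num at *
  obtain rfl | had := eq_or_ne a d
  · simp_rw [mul_right_comm _ (g b _), mul_right_comm _ (g c _), hsq, one_mul, hpair]
    unfold pairingWeight; split_ifs <;> subst_vars <;> norm_num at *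
  rw [integral_mul_mul_mul_eq_zero_of_ne hmeas hval hp1 hindep hab hac had]
  simp [pairingWeight, hab, hac, had]

theorem sum_mul_pairingWeight [Fintype H] (F : H → ℝ) :
    ∑ a, ∑ b, ∑ c, ∑ d, F a * F b * F c * F d * pairingWeight a b c d =
      3 * (∑ j, F j ^ 2) ^ 2 - 2 * ∑ j, F j ^ 4 := by
  simp only [pairingWeight, mul_add, mul_sub, sum_add_distrib, sum_sub_distrib,
    mul_ite, mul_zero, mul_one, sum_ite_eq, mem_univ, if_true, sum_ite_irrel, sum_const_zero]
  rw [sq (∑ j, F j ^ 2), sum_mul_sum]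
  ring_nf
  rw [← sum_mul]

end

theorem ams_sketch_fourth_moment_general
    {Ω : Type*} [MeasurableSpace Ω] (μ : Measure Ω) [IsProbabilityMeasure μ]
    {H : Type*} [Fintype H] (F : H → ℝ) (g : H → Ω → ℝ)
    (hmeas : ∀ j, Measurable (g j))
    (hval : ∀ j ω, g j ω = 1 ∨ g j ω = -1)
    (hp1 : ∀ j, μ {ω | g j ω = 1} = 1 / 2)
    (hindep : ∀ S : Finset H, S.card ≤ 4 →
      iIndepFun
        (fun j : S => g (j : H)) μ) :
    ∫ ω, (∑ j, F j * g j ω) ^ 4 ∂μ =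
      3 * (∑ j, (F j) ^ 2) ^ 2 - 2 * ∑ j, (F j) ^ 4 := by
  classical
  have hnorm (j : H) (ω : Ω) : ‖g j ω‖ = 1 := by rcases hval j ω with h | h <;> simp [h]
  have hint (a b c d : H) : Integrable (fun ω => g a ω * g b ω * g c ω * g d ω) μ :=
    .of_bound (by fun_prop) 1 (ae_of_all _ fun ω => by simp [hnorm])
  rw [integral_sum_mul_pow_four F hint]
  simp only [integral_mul_mul_mul_eq_pairingWeight hmeas hval hp1 hindep]
  exact sum_mul_pairingWeight F

/-- **Fourth moment of the AMS sketch.** If `(g j)` are 4-wise independent Rademacher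
random variables and `X = ∑ j, F j * g j`, then `E[X⁴] = 3 F₂² - 2 F₄` where
`F₂ = ∑ j, F j ^ 2` and `F₄ = ∑ j, F j ^ 4`. -/
theorem ams_sketch_fourth_moment
    {Ω : Type*} [MeasurableSpace Ω] (μ : Measure Ω) [IsProbabilityMeasure μ]
    {H : Type*} [Fintype H] [Nonempty H] (F : H → ℝ) (g : H → Ω → ℝ)
    (hmeas : ∀ j, Measurable (g j))
    (hval : ∀ j ω, g j ω = 1 ∨ g j ω = -1)
    (hp1 : ∀ j, μ {ω | g j ω = 1} = 1 / 2)
    (hpm1 : ∀ j, μ {ω | g j ω = -1} = 1 / 2)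
    (hindep : ∀ S : Finset H, S.card ≤ 4 →
      iIndepFun
        (fun j : S => g (j : H)) μ) :
    ∫ ω, (∑ j, F j * g j ω) ^ 4 ∂μ =
      3 * (∑ j, (F j) ^ 2) ^ 2 - 2 * ∑ j, (F j) ^ 4 :=
  ams_sketch_fourth_moment_general μ F g hmeas hval hp1 hindep
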